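/- The graph G = G(Q,S) is bipartite; in particular, the sets A = {q*, v, w} ∪ {S_1,...,S_n} ∪ Q and B = {u_1, u_2} ∪ {S_1',...,S_n'} ∪ Q' form a bipartition of its vertex set with no edge inside A and no edge inside B. -/

import Mathlib

/-- Raw vertex names for the graph `G(Q,S)`: elements `q_i`, hyperedges `S_j`,
copies `S_j'`, subdivision vertices `q^i_j`, and special vertices `q*`, `u₁`, `u₂`, `v`, `w`. -/
inductive HVertex (m n : ℕ) : Type
  | elt : Fin m → HVertex m n
  | hyp : Fin n → HVertex m n
  | copy : Fin n → HVertex m n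
  | sub : Fin m → Fin n → HVertex m n
  | qstar : HVertex m n
  | u1 : HVertex m n
  | u2 : HVertex m n
  | v : HVertex m n
  | w : HVertex m n

/-- A raw vertex name is an actual vertex of `G(Q,S)`: the subdivision vertex `q^i_j`
exists only when `q_i ∈ S_j`. -/
def HVertex.OK {m n : ℕ} (S : Fin n → Set (Fin m)) : HVertex m n → Prop
  | .sub i j => i ∈ S j
  | _ => True

/-- The vertex set of `G(Q,S)`. -/
def GVertex {m n : ℕ} (S : Fin n → Set (Fin m)) : Type := {x : HVertex m n // x.OK S}

/-- The (asymmetrically listed) edges of `G(Q,S)`: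
`q^i_j q_i`, `q^i_j S_j`, `q_i S_j'` (for `q_i ∈ S_j`), `S_j S_k'` (all `j,k`),
`q* u₁`, `q* u₂`, `q* q^i_j`, `u₁ S_j`, `u₂ S_j`, `u₁ v`, `u₂ v`, `w S_j'`. -/
def baseAdj {m n : ℕ} (S : Fin n → Set (Fin m)) : HVertex m n → HVertex m n → Prop
  | .sub i _, .elt i' => i = i'
  | .sub _ j, .hyp j' => j = j'
  | .elt i, .copy j => i ∈ S j
  | .hyp _, .copy _ => True
  | .qstar, .u1 => True
  | .qstar, .u2 => True
  | .qstar, .sub _ _ => True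
  | .u1, .hyp _ => True
  | .u2, .hyp _ => True
  | .u1, .v => True
  | .u2, .v => True
  | .w, .copy _ => True
  | _, _ => False

/-- The graph `G = G(Q,S)`. -/
def GQS {m n : ℕ} (S : Fin n → Set (Fin m)) : SimpleGraph (GVertex S) :=
  SimpleGraph.fromRel (fun a b => baseAdj S a.1 b.1)

/-- The side `A = {q*, v, w} ∪ {S_1,...,S_n} ∪ Q` of the bipartition of `G(Q,S)`;
its complement is `B = {u₁, u₂} ∪ {S_1',...,S_n'} ∪ Q'`. -/
def inSideA {m n : ℕ} : HVertex m n → Prop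
  | .qstar | .v | .w | .hyp _ | .elt _ => True
  | _ => False

lemma baseAdj_inSideA_iff {m n : ℕ} {S : Fin n → Set (Fin m)} {x y : HVertex m n}
    (h : baseAdj S x y) : inSideA x ↔ ¬ inSideA y := by
  cases x <;> cases y <;> simp_all [baseAdj, inSideA]

lemma GQS_adj_inSideA_iff {m n : ℕ} {S : Fin n → Set (Fin m)} {a b : GVertex S}
    (h : (GQS S).Adj a b) : inSideA a.1 ↔ ¬ inSideA b.1 := by
  obtain ⟨-, hab | hba⟩ := h
  · exact baseAdj_inSideA_iff hab
  · exact iff_not_comm.mp (baseAdj_inSideA_iff hba)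

/-- `Prop` serves as the two-element set of colours. -/
def sideColoring {m n : ℕ} (S : Fin n → Set (Fin m)) : (GQS S).Coloring Prop :=
  SimpleGraph.Coloring.mk (fun a => inSideA a.1) fun hab hside =>
    iff_not_self (hside ▸ GQS_adj_inSideA_iff hab)

theorem stmt_6 {m n : ℕ} (S : Fin n → Set (Fin m)) :
    (GQS S).Colorable 2 ∧
      ∀ a b : GVertex S, (GQS S).Adj a b → (inSideA a.1 ↔ ¬ inSideA b.1) :=
  ⟨by simpa using (sideColoring S).colorable, fun _ _ => GQS_adj_inSideA_iff⟩
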